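/- Constant curvature of cycle complements: for every n ≥ 4 and every vertex v of G_n = (C_n)ᶜ, the Euler–Levitt curvature at v satisfies ∫_{-1}^0 f_{S(v)}(t) dt = (1 - 2·cos(π·n/3))/n = χ(G_n)/n. In particular the curvature is the same at every vertex and the curvatures sum to the Euler characteristic (Gauss–Bonnet). -/

import Mathlib

/-- The cycle graph `C_n` on `Fin n`: `i ~ j` iff `i - j ≡ ±1 (mod n)`. -/
def cycleGraph (n : ℕ) : SimpleGraph (Fin n) where
  Adj i j := i ≠ j ∧ ((i - j : Fin n).val = 1 ∨ (j - i : Fin n).val = 1)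
  symm := by
    constructor
    intro i j h
    exact ⟨h.1.symm, h.2.symm⟩
  loopless := by
    constructor
    intro i h
    exact h.1 rfl

instance (n : ℕ) : DecidableRel (cycleGraph n).Adj :=
  fun a b => inferInstanceAs (Decidable (a ≠ b ∧ ((a - b : Fin n).val = 1 ∨ (b - a : Fin n).val = 1)))

/-- The path graph `P_n` on `Fin n`: `i ~ j` iff `|i - j| = 1`. -/
def pathGraph' (n : ℕ) : SimpleGraph (Fin n) where
  Adj i j := (i : ℕ) + 1 = (j : ℕ) ∨ (j : ℕ) + 1 = (i : ℕ)
  symm := by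
    constructor
    intro i j h
    exact h.symm
  loopless := by
    constructor
    intro i h
    rcases h with h | h <;> omega

instance (n : ℕ) : DecidableRel (pathGraph' n).Adj :=
  fun a b => inferInstanceAs (Decidable ((a : ℕ) + 1 = (b : ℕ) ∨ (b : ℕ) + 1 = (a : ℕ)))

/-- The finset of all nonempty cliques of a finite simple graph. -/
noncomputable def cliquesOf {V : Type*} [Finite V] (G : SimpleGraph V) : Finset (Finset V) := by
  classical
  letI : Fintype V := Fintype.ofFinite V
  exact Finset.univ.filter (fun s : Finset V => s.Nonempty ∧ G.IsClique (s : Set V))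

/-- The number of cliques with exactly `j` elements (the empty clique counting for `j = 0`). -/
noncomputable def cliqueCount {V : Type*} [Finite V] (G : SimpleGraph V) (j : ℕ) : ℕ := by
  classical
  letI : Fintype V := Fintype.ofFinite V
  exact (Finset.univ.filter (fun s : Finset V => G.IsClique (s : Set V) ∧ s.card = j)).card

/-- The Euler characteristic of the clique (Whitney) complex of `G`. -/
noncomputable def eulerChar {V : Type*} [Finite V] (G : SimpleGraph V) : ℤ :=
  ∑ c ∈ cliquesOf G, (-1 : ℤ) ^ (c.card + 1)

/-- The simplex generating function `f_G(t) = 1 + ∑_c t^{|c|}`. -/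
noncomputable def fgen {V : Type*} [Finite V] (G : SimpleGraph V) (t : ℝ) : ℝ :=
  1 + ∑ c ∈ cliquesOf G, t ^ c.card


open Polynomial in
noncomputable def fibP : ℕ → Polynomial ℝ
  | 0 => 1
  | 1 => 1 + X
  | (m+2) => fibP (m+1) + X * fibP m

open Polynomial in
noncomputable def lucP : ℕ → Polynomial ℝ
  | 0 => 2
  | 1 => 1
  | (m+2) => lucP (m+1) + X * lucP m

open Polynomial

lemma fibP_add2 (m : ℕ) : fibP (m+2) = fibP (m+1) + X * fibP m := by rw [fibP]
lemma lucP_add2 (m : ℕ) : lucP (m+2) = lucP (m+1) + X * lucP m := by rw [lucP]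

lemma luc_eq_fib : ∀ m, lucP (m+3) = fibP (m+2) + X * fibP m := by
  intro m
  induction m using Nat.twoStepInduction with
  | zero =>
      rw [show lucP 3 = lucP (1+2) from rfl, lucP_add2, show lucP 2 = lucP (0+2) from rfl,
        lucP_add2, show fibP 2 = fibP (0+2) from rfl, fibP_add2]
      simp [lucP, fibP]; ring
  | one =>
      rw [show lucP 4 = lucP (2+2) from rfl, lucP_add2, show lucP 3 = lucP (1+2) from rfl,
        lucP_add2, show lucP 2 = lucP (0+2) from rfl, lucP_add2,
        show fibP 3 = fibP (1+2) from rfl, fibP_add2, show fibP 2 = fibP (0+2) from rfl, fibP_add2]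
      simp [lucP, fibP]; ring
  | more m ih1 ih2 =>
      rw [show m+2+3 = (m+3)+2 from rfl, lucP_add2, show m+3+1 = (m+1)+3 from rfl, ih2, ih1,
        fibP_add2 (m+2), show m+2+1 = m+1+2 from rfl, fibP_add2 (m+1),
        show m+1+1 = m+2 from rfl, fibP_add2 m]
      ring

lemma derivative_luc : ∀ m, derivative (lucP (m+3)) = C ((m:ℝ)+3) * fibP m := by
  intro m
  induction m using Nat.twoStepInduction with
  | zero =>
      rw [show lucP (0+3) = lucP (1+2) from rfl, lucP_add2, show lucP 2 = lucP (0+2) from rfl,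
        lucP_add2]
      simp [lucP, fibP, map_ofNat]
      ring
  | one =>
      rw [show lucP (1+3) = lucP (2+2) from rfl, lucP_add2, show lucP 3 = lucP (1+2) from rfl,
        lucP_add2, show lucP 2 = lucP (0+2) from rfl, lucP_add2]
      simp [lucP, fibP, map_ofNat]
      ring
  | more m ih1 ih2 =>
      rw [show m+2+3 = (m+3)+2 from rfl, lucP_add2, show m+3+1 = (m+1)+3 from rfl]
      rw [derivative_add, derivative_mul, derivative_X, ih2, ih1, luc_eq_fib m, fibP_add2 m]
      push_cast
      simp only [map_add, map_one, map_ofNat]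
      ring

lemma eval_luc_zero : ∀ m, (lucP (m+1)).eval 0 = 1 := by
  intro m
  induction m with
  | zero => simp [lucP]
  | succ k ih => rw [show k+1+1 = k+2 from rfl, lucP_add2]; simp [ih]

lemma cos_step (x : ℝ) : Real.cos (x + Real.pi/3) = Real.cos x - Real.cos (x - Real.pi/3) := by
  rw [Real.cos_add, Real.cos_sub, Real.cos_pi_div_three]
  ring

lemma eval_luc_neg_one : ∀ m, (lucP m).eval (-1) = 2 * Real.cos (Real.pi * m / 3) := by
  intro m
  induction m using Nat.twoStepInduction with
  | zero => simp [lucP]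
  | one => norm_num [lucP, Real.cos_pi_div_three]
  | more m ih1 ih2 =>
      rw [lucP_add2]
      simp only [eval_add, eval_mul, eval_X, ih1, ih2]
      have h1 : Real.pi * (↑(m+2)) / 3 = (Real.pi * (↑(m+1)) / 3) + Real.pi/3 := by push_cast; ring
      have h2 : Real.pi * (↑m) / 3 = (Real.pi * (↑(m+1)) / 3) - Real.pi/3 := by push_cast; ring
      rw [h1, h2, cos_step]
      ring

lemma integral_fib (m : ℕ) :
    (∫ t in (-1:ℝ)..0, (fibP m).eval t) = (1 - 2 * Real.cos (Real.pi * (m+3) / 3)) / (m+3) := by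
  have hd : ∀ x : ℝ, deriv (fun y => (lucP (m+3)).eval y) x = ((m:ℝ)+3) * (fibP m).eval x := by
    intro x
    rw [Polynomial.deriv, derivative_luc m]
    simp
  have hi : (∫ t in (-1:ℝ)..0, deriv (fun y => (lucP (m+3)).eval y) t)
      = (lucP (m+3)).eval 0 - (lucP (m+3)).eval (-1) := by
    apply intervalIntegral.integral_deriv_eq_sub
    · intro x _; exact (lucP (m+3)).differentiableAt
    · apply Continuous.intervalIntegrable
      have : (deriv (fun y => (lucP (m+3)).eval y)) = fun x => ((m:ℝ)+3) * (fibP m).eval x :=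
        funext hd
      rw [this]
      exact continuous_const.mul (fibP m).continuous
  rw [show (∫ t in (-1:ℝ)..0, deriv (fun y => (lucP (m+3)).eval y) t)
      = ∫ t in (-1:ℝ)..0, ((m:ℝ)+3) * (fibP m).eval t from
    intervalIntegral.integral_congr (fun x _ => hd x)] at hi
  rw [intervalIntegral.integral_const_mul] at hi
  have hne : ((m:ℝ)+3) ≠ 0 := by positivity
  have h0 : (lucP (m+3)).eval 0 = 1 := eval_luc_zero (m+2)
  have h1 : (lucP (m+3)).eval (-1) = 2 * Real.cos (Real.pi * (m+3) / 3) := by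
    rw [eval_luc_neg_one (m+3)]; push_cast; ring_nf
  have key : (∫ t in (-1:ℝ)..0, (fibP m).eval t)
      = ((lucP (m+3)).eval 0 - (lucP (m+3)).eval (-1)) / ((m:ℝ)+3) := by
    rw [eq_div_iff hne]; rw [mul_comm] at hi; linarith [hi]
  rw [key, h0, h1]

/-- Independent sets of the path on `{0, …, m-1}`. -/
def IS (m : ℕ) : Finset (Finset ℕ) :=
  (Finset.range m).powerset.filter (fun s => ∀ a ∈ s, a + 1 ∉ s)

lemma mem_IS {m : ℕ} {s : Finset ℕ} :
    s ∈ IS m ↔ (∀ a ∈ s, a < m) ∧ ∀ a ∈ s, a + 1 ∉ s := by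
  simp [IS, Finset.subset_iff]

lemma sum_IS (m : ℕ) (t : ℝ) : ∑ s ∈ IS m, t ^ s.card = (fibP m).eval t := by
  induction m using Nat.twoStepInduction with
  | zero =>
      have : IS 0 = {∅} := by
        ext s
        simp only [mem_IS, Finset.mem_singleton]
        constructor
        · rintro ⟨h1, -⟩
          rw [Finset.eq_empty_iff_forall_notMem]
          intro a ha; exact absurd (h1 a ha) (by omega)
        · rintro rfl; simp
      rw [this]; simp [fibP]
  | one =>
      have : IS 1 = {∅, {0}} := by
        rw [IS, Finset.range_one, show ({0}: Finset ℕ).powerset = {∅, {0}} from rfl]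
        apply Finset.filter_true_of_mem
        intro s hs a ha hc
        simp only [Finset.mem_insert, Finset.mem_singleton] at hs
        rcases hs with rfl | rfl <;> simp_all
      rw [this]
      rw [Finset.sum_insert (by decide)]
      simp [fibP]
  | more m ih ih1 =>
      rw [← Finset.sum_filter_add_sum_filter_not (IS (m+2)) (fun s => m+1 ∈ s)]
      have hA : (IS (m+2)).filter (fun s => ¬ (m+1 ∈ s)) = IS (m+1) := by
        ext s
        simp only [Finset.mem_filter, mem_IS]
        constructor
        · rintro ⟨⟨hlt, hsp⟩, hnm⟩
          refine ⟨fun a ha => ?_, hsp⟩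
          by_cases h' : a = m+1
          · exact absurd (h' ▸ ha) hnm
          · have := hlt a ha; omega
        · rintro ⟨hlt, hsp⟩
          exact ⟨⟨fun a ha => Nat.lt_succ_of_lt (hlt a ha), hsp⟩,
            fun hm => absurd (hlt _ hm) (by omega)⟩
      have hB : ∑ s ∈ (IS (m+2)).filter (fun s => m+1 ∈ s), t ^ s.card
          = t * ∑ u ∈ IS m, t ^ u.card := by
        rw [Finset.mul_sum]
        refine Finset.sum_nbij' (fun s => s.erase (m+1)) (fun u => insert (m+1) u) ?_ ?_ ?_ ?_ ?_
        · intro s hs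
          simp only [Finset.mem_filter, mem_IS] at hs
          obtain ⟨⟨hlt, hsp⟩, hm⟩ := hs
          rw [mem_IS]
          constructor
          · intro a ha
            rw [Finset.mem_erase] at ha
            have h1 := hlt a ha.2
            have h2 := ha.1
            by_cases h3 : a = m
            · subst h3; exact absurd hm (hsp a ha.2)
            · omega
          · intro a ha
            rw [Finset.mem_erase] at ha ⊢
            intro hc
            exact hsp a ha.2 hc.2
        · intro u hu
          rw [mem_IS] at hu
          obtain ⟨hlt, hsp⟩ := hu
          simp only [Finset.mem_filter, mem_IS]
          refine ⟨⟨?_, ?_⟩, Finset.mem_insert_self _ _⟩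
          · intro a ha
            rcases Finset.mem_insert.1 ha with rfl | h
            · omega
            · have := hlt a h; omega
          · intro a ha hc
            rcases Finset.mem_insert.1 ha with rfl | h
            · rcases Finset.mem_insert.1 hc with h' | h'
              · omega
              · have := hlt _ h'; omega
            · rcases Finset.mem_insert.1 hc with h' | h'
              · have := hlt _ h; omega
              · exact hsp a h h'
        · intro s hs
          simp only [Finset.mem_filter] at hs
          exact Finset.insert_erase hs.2
        · intro u hu
          rw [mem_IS] at hu
          exact Finset.erase_insert (fun hm => absurd (hu.1 _ hm) (by omega))
        · intro s hs
          simp only [Finset.mem_filter] at hs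
          rw [Finset.card_erase_of_mem hs.2]
          have h1 : 1 ≤ s.card := Finset.card_pos.2 ⟨m+1, hs.2⟩
          have h2 : s.card - 1 + 1 = s.card := by omega
          calc t ^ s.card = t ^ (s.card - 1 + 1) := by rw [h2]
          _ = t * t ^ (s.card - 1) := by rw [pow_succ]; ring
      rw [hA, hB, ih, ih1, fibP_add2]
      simp
      ring

/-- Independent sets of the cycle on `{0, …, n-1}`. -/
def CIS (n : ℕ) : Finset (Finset ℕ) :=
  (Finset.range n).powerset.filter
    (fun s => (∀ a ∈ s, a + 1 ∉ s) ∧ ¬(0 ∈ s ∧ n - 1 ∈ s))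

lemma mem_CIS {n : ℕ} {s : Finset ℕ} :
    s ∈ CIS n ↔ (∀ a ∈ s, a < n) ∧ (∀ a ∈ s, a + 1 ∉ s) ∧ ¬(0 ∈ s ∧ n - 1 ∈ s) := by
  simp [CIS, Finset.subset_iff, and_assoc]

lemma sum_CIS (n : ℕ) (hn : 4 ≤ n) (t : ℝ) :
    ∑ s ∈ CIS n, t ^ s.card = (fibP (n-1)).eval t + t * (fibP (n-3)).eval t := by
  classical
  rw [← Finset.sum_filter_add_sum_filter_not (CIS n) (fun s => 0 ∈ s)]
  have hA : ∑ s ∈ (CIS n).filter (fun s => ¬ 0 ∈ s), t ^ s.card = (fibP (n-1)).eval t := by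
    rw [← sum_IS]
    have key1 : ∀ s ∈ (CIS n).filter (fun s => ¬ 0 ∈ s),
        ((Finset.range (n-1)).filter (fun b => b + 1 ∈ s)).map
          ⟨fun b => b + 1, fun a b h => by simpa using h⟩ = s := by
      intro s hs
      simp only [Finset.mem_filter, mem_CIS] at hs
      obtain ⟨⟨hlt, hsp, hcy⟩, h0⟩ := hs
      ext a
      simp only [Finset.mem_map, Finset.mem_filter, Finset.mem_range,
        Function.Embedding.coeFn_mk, DFunLike.coe]
      constructor
      · rintro ⟨b, ⟨hb1, hb2⟩, rfl⟩; exact hb2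
      · intro ha
        have h1 : a ≠ 0 := fun h => h0 (h ▸ ha)
        have h2 : a < n := hlt a ha
        exact ⟨a - 1, ⟨by omega, by rwa [show a - 1 + 1 = a by omega]⟩, by omega⟩
    refine Finset.sum_nbij' (fun s => (Finset.range (n-1)).filter (fun b => b + 1 ∈ s))
      (fun u => u.map ⟨fun b => b + 1, fun a b h => by simpa using h⟩) ?_ ?_ ?_ ?_ ?_
    · intro s hs
      have hs' := hs
      simp only [Finset.mem_filter, mem_CIS] at hs'
      obtain ⟨⟨hlt, hsp, hcy⟩, h0⟩ := hs'
      rw [mem_IS]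
      constructor
      · intro a ha
        simp only [Finset.mem_filter, Finset.mem_range] at ha
        exact ha.1
      · intro a ha hc
        simp only [Finset.mem_filter, Finset.mem_range] at ha hc
        exact hsp (a+1) ha.2 hc.2
    · intro u hu
      rw [mem_IS] at hu
      obtain ⟨hlt, hsp⟩ := hu
      simp only [Finset.mem_filter, mem_CIS]
      refine ⟨⟨?_, ?_, ?_⟩, ?_⟩
      · intro a ha
        simp only [Finset.mem_map, Function.Embedding.coeFn_mk, DFunLike.coe] at ha
        obtain ⟨b, hb, rfl⟩ := ha
        have := hlt b hb; omega
      · intro a ha hc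
        simp only [Finset.mem_map, Function.Embedding.coeFn_mk, DFunLike.coe] at ha hc
        obtain ⟨b, hb, rfl⟩ := ha
        obtain ⟨c, hc', hcc⟩ := hc
        have : c = b + 1 := by omega
        exact hsp b hb (this ▸ hc')
      · rintro ⟨h0', -⟩
        simp only [Finset.mem_map, Function.Embedding.coeFn_mk, DFunLike.coe] at h0'
        obtain ⟨b, -, hb⟩ := h0'; omega
      · intro h0'
        simp only [Finset.mem_map, Function.Embedding.coeFn_mk, DFunLike.coe] at h0'
        obtain ⟨b, -, hb⟩ := h0'; omega
    · exact fun s hs => key1 s hs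
    · intro u hu
      rw [mem_IS] at hu
      obtain ⟨hlt, hsp⟩ := hu
      ext b
      simp only [Finset.mem_filter, Finset.mem_range, Finset.mem_map,
        Function.Embedding.coeFn_mk, DFunLike.coe]
      constructor
      · rintro ⟨hb, c, hc, hcb⟩
        have : c = b := by omega
        exact this ▸ hc
      · intro hb
        exact ⟨hlt b hb, b, hb, rfl⟩
    · intro s hs
      have := congrArg Finset.card (key1 s hs)
      rw [Finset.card_map] at this
      rw [this]
  have hB : ∑ s ∈ (CIS n).filter (fun s => 0 ∈ s), t ^ s.card
      = t * (fibP (n-3)).eval t := by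
    rw [← sum_IS, Finset.mul_sum]
    have key2 : ∀ s ∈ (CIS n).filter (fun s => 0 ∈ s),
        insert 0 (((Finset.range (n-3)).filter (fun b => b + 2 ∈ s)).map
          ⟨fun b => b + 2, fun a b h => by simpa using h⟩) = s := by
      intro s hs
      simp only [Finset.mem_filter, mem_CIS] at hs
      obtain ⟨⟨hlt, hsp, hcy⟩, h0⟩ := hs
      ext a
      simp only [Finset.mem_insert, Finset.mem_map, Finset.mem_filter, Finset.mem_range,
        Function.Embedding.coeFn_mk, DFunLike.coe]
      constructor
      · rintro (rfl | ⟨b, ⟨hb1, hb2⟩, rfl⟩)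
        · exact h0
        · exact hb2
      · intro ha
        by_cases h1 : a = 0
        · exact Or.inl h1
        · right
          have h2 : a < n := hlt a ha
          have h3 : a ≠ 1 := by
            intro h
            rw [h] at ha
            exact hsp 0 h0 (by simpa using ha)
          have h4 : a ≠ n - 1 := by
            intro h; exact hcy ⟨h0, h ▸ ha⟩
          exact ⟨a - 2, ⟨by omega, by rwa [show a - 2 + 2 = a by omega]⟩, by omega⟩
    refine Finset.sum_nbij' (fun s => (Finset.range (n-3)).filter (fun b => b + 2 ∈ s))
      (fun u => insert 0 (u.map ⟨fun b => b + 2, fun a b h => by simpa using h⟩)) ?_ ?_ ?_ ?_ ?_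
    · intro s hs
      have hs' := hs
      simp only [Finset.mem_filter, mem_CIS] at hs'
      obtain ⟨⟨hlt, hsp, hcy⟩, h0⟩ := hs'
      rw [mem_IS]
      constructor
      · intro a ha
        simp only [Finset.mem_filter, Finset.mem_range] at ha
        exact ha.1
      · intro a ha hc
        simp only [Finset.mem_filter, Finset.mem_range] at ha hc
        exact hsp (a+2) ha.2 hc.2
    · intro u hu
      rw [mem_IS] at hu
      obtain ⟨hlt, hsp⟩ := hu
      simp only [Finset.mem_filter, mem_CIS]
      refine ⟨⟨?_, ?_, ?_⟩, Finset.mem_insert_self _ _⟩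
      · intro a ha
        rcases Finset.mem_insert.1 ha with rfl | h
        · omega
        · simp only [Finset.mem_map, Function.Embedding.coeFn_mk, DFunLike.coe] at h
          obtain ⟨b, hb, rfl⟩ := h
          have := hlt b hb; omega
      · intro a ha hc
        rcases Finset.mem_insert.1 ha with rfl | h
        · rcases Finset.mem_insert.1 hc with h' | h'
          · omega
          · simp only [Finset.mem_map, Function.Embedding.coeFn_mk, DFunLike.coe] at h'
            obtain ⟨b, -, hb⟩ := h'; omega
        · simp only [Finset.mem_map, Function.Embedding.coeFn_mk, DFunLike.coe] at h
          obtain ⟨b, hb, rfl⟩ := h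
          rcases Finset.mem_insert.1 hc with h' | h'
          · omega
          · simp only [Finset.mem_map, Function.Embedding.coeFn_mk, DFunLike.coe] at h'
            obtain ⟨c, hc', hcc⟩ := h'
            have : c = b + 1 := by omega
            exact hsp b hb (this ▸ hc')
      · rintro ⟨-, hn1⟩
        rcases Finset.mem_insert.1 hn1 with h' | h'
        · omega
        · simp only [Finset.mem_map, Function.Embedding.coeFn_mk, DFunLike.coe] at h'
          obtain ⟨b, hb, hbb⟩ := h'
          have := hlt b hb; omega
    · exact fun s hs => key2 s hs
    · intro u hu
      rw [mem_IS] at hu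
      obtain ⟨hlt, hsp⟩ := hu
      ext b
      simp only [Finset.mem_filter, Finset.mem_range, Finset.mem_insert, Finset.mem_map,
        Function.Embedding.coeFn_mk, DFunLike.coe]
      constructor
      · rintro ⟨hb, (h | ⟨c, hc, hcb⟩)⟩
        · omega
        · have : c = b := by omega
          exact this ▸ hc
      · intro hb
        exact ⟨hlt b hb, Or.inr ⟨b, hb, rfl⟩⟩
    · intro s hs
      have hcard := congrArg Finset.card (key2 s hs)
      have h0 : (0:ℕ) ∉ ((Finset.range (n-3)).filter (fun b => b + 2 ∈ s)).map
          (⟨fun b => b + 2, fun a b h => by simpa using h⟩ : ℕ ↪ ℕ) := by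
        simp only [Finset.mem_map, Function.Embedding.coeFn_mk, DFunLike.coe]
        rintro ⟨b, -, hb⟩; omega
      rw [Finset.card_insert_of_notMem h0, Finset.card_map] at hcard
      rw [← hcard, pow_succ]
      ring
  rw [hA, hB]
  ring

lemma mem_cliquesOf {V : Type*} [Finite V] {G : SimpleGraph V} {s : Finset V} :
    s ∈ cliquesOf G ↔ s.Nonempty ∧ G.IsClique (s : Set V) := by
  classical
  simp [cliquesOf]

lemma fgen_eq {V : Type*} [Finite V] (G : SimpleGraph V) (F : Finset (Finset V))
    (hF : ∀ s, s ∈ F ↔ G.IsClique (s : Set V)) (t : ℝ) :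
    fgen G t = ∑ s ∈ F, t ^ s.card := by
  classical
  have hFe : F = insert ∅ (cliquesOf G) := by
    ext s
    simp only [hF, Finset.mem_insert, mem_cliquesOf]
    constructor
    · intro h
      rcases s.eq_empty_or_nonempty with h' | h'
      · exact Or.inl h'
      · exact Or.inr ⟨h', h⟩
    · rintro (rfl | ⟨-, h⟩)
      · simp [SimpleGraph.isClique_empty]
      · exact h
  have hne : ∅ ∉ cliquesOf G := by simp [mem_cliquesOf]
  rw [hFe, Finset.sum_insert hne, fgen]
  simp [add_comm]

lemma fin_sub_val {n : ℕ} [NeZero n] (a b : Fin n) :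
    ((a - b : Fin n) : ℕ) = if (b:ℕ) ≤ (a:ℕ) then (a:ℕ) - (b:ℕ) else n + (a:ℕ) - (b:ℕ) := by
  split_ifs with h
  · exact Fin.coe_sub_iff_le.2 (by rwa [Fin.le_def])
  · exact Fin.coe_sub_iff_lt.2 (by rw [Fin.lt_def]; omega)

lemma cycleGraph_adj {n : ℕ} (a b : Fin n) :
    (cycleGraph n).Adj a b ↔
      a ≠ b ∧ (((a - b : Fin n)).val = 1 ∨ ((b - a : Fin n)).val = 1) := Iff.rfl

lemma cycle_adj_vals {n : ℕ} [NeZero n] (hn : 3 ≤ n) (a b : Fin n) :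
    (cycleGraph n).Adj a b ↔
      ((a:ℕ) ≠ (b:ℕ) ∧ ((a:ℕ) = (b:ℕ) + 1 ∨ (b:ℕ) = (a:ℕ) + 1 ∨
        ((a:ℕ) = 0 ∧ (b:ℕ) = n - 1) ∨ ((b:ℕ) = 0 ∧ (a:ℕ) = n - 1))) := by
  have ha := a.isLt
  have hb := b.isLt
  rw [cycleGraph_adj, Ne, Fin.ext_iff, fin_sub_val, fin_sub_val]
  split_ifs <;> omega

lemma cycle_adj_sub {n : ℕ} [NeZero n] (hn : 3 ≤ n) (a b : Fin n) :
    (cycleGraph n).Adj a b ↔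
      (((b - a : Fin n) : ℕ) = 1 ∨ ((b - a : Fin n) : ℕ) = n - 1) := by
  have ha := a.isLt
  have hb := b.isLt
  rw [cycleGraph_adj, Ne, Fin.ext_iff, fin_sub_val, fin_sub_val]
  split_ifs <;> omega

open Fin.NatCast in
lemma sphere_fgen (n : ℕ) (hn : 4 ≤ n) (v : Fin n) (t : ℝ) :
    fgen (((cycleGraph n)ᶜ).induce (((cycleGraph n)ᶜ).neighborSet v)) t
      = (fibP (n-3)).eval t := by
  haveI : NeZero n := ⟨by omega⟩
  classical
  letI : Fintype ↥(((cycleGraph n)ᶜ).neighborSet v) := Fintype.ofFinite _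
  set N := ((cycleGraph n)ᶜ).neighborSet v with hN
  set H := ((cycleGraph n)ᶜ).induce N with hH
  set x : ↥N → ℕ := fun u => ((u.1 - v : Fin n) : ℕ) with hx
  have hn3 : (3:ℕ) ≤ n := by omega
  -- bounds for members
  have hbd : ∀ u : ↥N, 2 ≤ x u ∧ x u ≤ n - 2 := by
    rintro ⟨u, hu⟩
    have h : ((cycleGraph n)ᶜ).Adj v u := hu
    rw [SimpleGraph.compl_adj, cycle_adj_sub hn3] at h
    obtain ⟨hne, hnadj⟩ := h
    have h0 : ((u - v : Fin n) : ℕ) ≠ 0 := by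
      intro h0
      apply hne
      have : u - v = 0 := Fin.ext (by simpa using h0)
      have := sub_eq_zero.1 this
      exact this.symm
    simp only [hx]
    push_neg at hnadj
    have hlt : ((u - v : Fin n) : ℕ) < n := Fin.is_lt _
    omega
  -- injectivity
  have hinj : ∀ u w : ↥N, x u = x w → u = w := by
    intro u w h
    apply Subtype.ext
    have : u.1 - v = w.1 - v := Fin.ext h
    exact sub_left_inj.1 this
  -- adjacency in terms of x
  have hadj : ∀ u w : ↥N, H.Adj u w ↔
      (x u ≠ x w ∧ x u + 1 ≠ x w ∧ x w + 1 ≠ x u) := by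
    intro u w
    have hu := hbd u
    have hw := hbd w
    have hsub : w.1 - u.1 = (w.1 - v) - (u.1 - v) := (sub_sub_sub_cancel_right _ _ _).symm
    have hval : ((w.1 - u.1 : Fin n) : ℕ)
        = if x u ≤ x w then x w - x u else n + x w - x u := by
      rw [hsub, fin_sub_val]
    constructor
    · intro h
      have h' : ((cycleGraph n)ᶜ).Adj u.1 w.1 := h
      rw [SimpleGraph.compl_adj, cycle_adj_sub hn3] at h'
      obtain ⟨hne, hnadj⟩ := h'
      push_neg at hnadj
      have hxx : x u ≠ x w := fun he => hne (congrArg Subtype.val (hinj u w he))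
      rw [hval] at hnadj
      split_ifs at hnadj <;> omega
    · rintro ⟨h1, h2, h3⟩
      show ((cycleGraph n)ᶜ).Adj u.1 w.1
      rw [SimpleGraph.compl_adj, cycle_adj_sub hn3]
      refine ⟨fun he => h1 (by rw [hx]; simp [he]), ?_⟩
      push_neg
      rw [hval]
      split_ifs <;> omega
  -- the clique finset
  rw [fgen_eq H (Finset.univ.filter (fun s => H.IsClique (s : Set ↥N)))
    (by intro s; simp), ← sum_IS (n-3) t]
  set g : ↥N → ℕ := fun u => x u - 2 with hg
  have hginj : ∀ u w : ↥N, g u = g w → u = w := by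
    intro u w h
    have hu := hbd u
    have hw := hbd w
    exact hinj u w (by simp only [hg] at h; omega)
  refine Finset.sum_nbij' (fun s => s.image g)
    (fun u => Finset.univ.filter (fun w => g w ∈ u)) ?_ ?_ ?_ ?_ ?_
  · intro s hs
    rw [Finset.mem_filter] at hs
    have hcl := hs.2
    rw [mem_IS]
    constructor
    · intro a ha
      obtain ⟨u, hu, rfl⟩ := Finset.mem_image.1 ha
      have := hbd u
      simp only [hg]
      omega
    · intro a ha hc
      obtain ⟨u, hu, hgu⟩ := Finset.mem_image.1 ha
      obtain ⟨w, hw, hgw⟩ := Finset.mem_image.1 hc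
      have hu' := hbd u
      have hw' := hbd w
      have hxw : x w = x u + 1 := by simp only [hg] at hgu hgw; omega
      have hne : u ≠ w := fun he => by rw [he] at hxw; omega
      have := hcl (Finset.mem_coe.2 hu) (Finset.mem_coe.2 hw) hne
      rw [hadj u w] at this
      omega
  · intro u hu
    rw [mem_IS] at hu
    rw [Finset.mem_filter]
    refine ⟨Finset.mem_univ _, ?_⟩
    intro a ha b hb hne
    rw [Finset.mem_coe, Finset.mem_filter] at ha hb
    have hga : g a ∈ u := ha.2
    have hgb : g b ∈ u := hb.2
    have ha' := hbd a
    have hb' := hbd b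
    rw [hadj a b]
    have hxx : x a ≠ x b := fun he => hne (hinj a b he)
    refine ⟨hxx, fun h => ?_, fun h => ?_⟩
    · have he : g a + 1 = g b := by simp only [hg]; omega
      exact hu.2 (g a) hga (he ▸ hgb)
    · have he : g b + 1 = g a := by simp only [hg]; omega
      exact hu.2 (g b) hgb (he ▸ hga)
  · intro s hs
    ext w
    simp only [Finset.mem_filter, Finset.mem_univ, true_and, Finset.mem_image]
    constructor
    · rintro ⟨u, hu, hgu⟩
      have := hbd u; have := hbd w
      exact (hginj u w hgu) ▸ hu
    · intro hw
      exact ⟨w, hw, rfl⟩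
  · intro u hu
    rw [mem_IS] at hu
    ext b
    simp only [Finset.mem_image, Finset.mem_filter, Finset.mem_univ, true_and]
    constructor
    · rintro ⟨w, hw, rfl⟩
      exact hw
    · intro hb
      have hblt : b < n - 3 := hu.1 b hb
      have hlt : b + 2 < n := by omega
      refine ⟨⟨v + (↑(b+2) : Fin n), ?_⟩, ?_, ?_⟩
      · show ((cycleGraph n)ᶜ).Adj v _
        rw [SimpleGraph.compl_adj, cycle_adj_sub hn3]
        have hvv : (v + (↑(b+2) : Fin n)) - v = (↑(b+2) : Fin n) := add_sub_cancel_left v _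
        have hvc : ((↑(b+2) : Fin n) : ℕ) = b + 2 := Fin.val_cast_of_lt hlt
        constructor
        · intro he
          have : ((↑(b+2) : Fin n) : ℕ) = 0 := by rw [← hvv, ← he]; simp
          omega
        · push_neg
          rw [hvv, hvc]
          omega
      · show g _ ∈ u
        have hvv : (v + (↑(b+2) : Fin n)) - v = (↑(b+2) : Fin n) := add_sub_cancel_left v _
        have hvc : ((↑(b+2) : Fin n) : ℕ) = b + 2 := Fin.val_cast_of_lt hlt
        simp only [hg, hx, hvv, hvc]
        simpa using hb
      · show g _ = b
        have hvv : (v + (↑(b+2) : Fin n)) - v = (↑(b+2) : Fin n) := add_sub_cancel_left v _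
        have hvc : ((↑(b+2) : Fin n) : ℕ) = b + 2 := Fin.val_cast_of_lt hlt
        simp only [hg, hx, hvv, hvc]
        omega
  · intro s hs
    rw [Finset.card_image_of_injOn (fun u _ w _ h => hginj u w h)]

lemma cycle_compl_fgen (n : ℕ) (hn : 4 ≤ n) (t : ℝ) :
    fgen ((cycleGraph n)ᶜ) t = (fibP (n-1)).eval t + t * (fibP (n-3)).eval t := by
  haveI : NeZero n := ⟨by omega⟩
  classical
  have hn3 : (3:ℕ) ≤ n := by omega
  rw [fgen_eq ((cycleGraph n)ᶜ)
    (Finset.univ.filter (fun s : Finset (Fin n) => ((cycleGraph n)ᶜ).IsClique (s : Set (Fin n))))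
    (by intro s; simp), ← sum_CIS n hn t]
  refine Finset.sum_nbij' (fun s => s.image Fin.val)
    (fun u => Finset.univ.filter (fun a : Fin n => (a : ℕ) ∈ u)) ?_ ?_ ?_ ?_ ?_
  · intro s hs
    rw [Finset.mem_filter] at hs
    have hcl := hs.2
    rw [mem_CIS]
    refine ⟨?_, ?_, ?_⟩
    · intro a ha
      obtain ⟨b, hb, rfl⟩ := Finset.mem_image.1 ha
      exact b.isLt
    · intro a ha hc
      obtain ⟨b, hb, rfl⟩ := Finset.mem_image.1 ha
      obtain ⟨c, hc', hcc⟩ := Finset.mem_image.1 hc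
      have hne : b ≠ c := fun he => by rw [he] at hcc; omega
      have := hcl (Finset.mem_coe.2 hb) (Finset.mem_coe.2 hc') hne
      rw [SimpleGraph.compl_adj, cycle_adj_vals hn3] at this
      have hb' := b.isLt
      have hc'' := c.isLt
      push_neg at this
      omega
    · rintro ⟨h0, hn1⟩
      obtain ⟨b, hb, hbb⟩ := Finset.mem_image.1 h0
      obtain ⟨c, hc', hcc⟩ := Finset.mem_image.1 hn1
      have hne : b ≠ c := fun he => by rw [he] at hbb; omega
      have := hcl (Finset.mem_coe.2 hb) (Finset.mem_coe.2 hc') hne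
      rw [SimpleGraph.compl_adj, cycle_adj_vals hn3] at this
      push_neg at this
      omega
  · intro u hu
    rw [mem_CIS] at hu
    obtain ⟨hlt, hsp, hcy⟩ := hu
    rw [Finset.mem_filter]
    refine ⟨Finset.mem_univ _, ?_⟩
    intro a ha b hb hne
    rw [Finset.mem_coe, Finset.mem_filter] at ha hb
    rw [SimpleGraph.compl_adj, cycle_adj_vals hn3]
    have hne' : (a:ℕ) ≠ (b:ℕ) := fun he => hne (Fin.ext he)
    refine ⟨hne, fun hcon => ?_⟩
    obtain ⟨-, hdisj⟩ := hcon
    have h1 : (a:ℕ) ∈ u := ha.2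
    have h2 : (b:ℕ) ∈ u := hb.2
    have s1 := hsp _ h1
    have s2 := hsp _ h2
    rcases hdisj with h | h | ⟨h0, hn1⟩ | ⟨h0, hn1⟩
    · exact s2 (h ▸ h1)
    · exact s1 (h ▸ h2)
    · exact hcy ⟨h0 ▸ h1, hn1 ▸ h2⟩
    · exact hcy ⟨h0 ▸ h2, hn1 ▸ h1⟩
  · intro s hs
    ext a
    simp only [Finset.mem_filter, Finset.mem_univ, true_and, Finset.mem_image]
    constructor
    · rintro ⟨b, hb, hba⟩
      exact (Fin.ext hba : b = a) ▸ hb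
    · intro ha
      exact ⟨a, ha, rfl⟩
  · intro u hu
    rw [mem_CIS] at hu
    ext b
    simp only [Finset.mem_image, Finset.mem_filter, Finset.mem_univ, true_and]
    constructor
    · rintro ⟨a, ha, rfl⟩
      exact ha
    · intro hb
      exact ⟨⟨b, hu.1 b hb⟩, hb, rfl⟩
  · intro s hs
    rw [Finset.card_image_of_injOn (Fin.val_injective.injOn)]

lemma cycle_compl_eulerChar (n : ℕ) (hn : 4 ≤ n) :
    ((eulerChar ((cycleGraph n)ᶜ) : ℤ) : ℝ) = 1 - 2 * Real.cos (Real.pi * n / 3) := by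
  have h1 : ((eulerChar ((cycleGraph n)ᶜ) : ℤ) : ℝ) = 1 - fgen ((cycleGraph n)ᶜ) (-1) := by
    rw [eulerChar, fgen]
    push_cast
    rw [Finset.sum_congr rfl (fun c _ => by rw [pow_succ] : ∀ c ∈ cliquesOf ((cycleGraph n)ᶜ),
      ((-1:ℝ)) ^ (c.card + 1) = (-1:ℝ) ^ c.card * (-1))]
    rw [← Finset.sum_mul]
    ring
  rw [h1, cycle_compl_fgen n hn (-1)]
  have h2 : lucP n = fibP (n-1) + Polynomial.X * fibP (n-3) := by
    have e1 : n - 3 + 3 = n := by omega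
    have e2 : n - 3 + 2 = n - 1 := by omega
    have := luc_eq_fib (n-3)
    rw [e1, e2] at this
    exact this
  have h3 : (fibP (n-1)).eval (-1) + (-1) * (fibP (n-3)).eval (-1) = (lucP n).eval (-1) := by
    rw [h2]
    simp
  rw [h3, eval_luc_neg_one n]

/-- Constant curvature of cycle complements: the Euler–Levitt curvature of `G_n = (C_n)ᶜ`
at every vertex equals `(1 - 2 cos(π n/3))/n = χ(G_n)/n`. -/
theorem constant_curvature_cycleComplement (n : ℕ) (hn : 4 ≤ n) (v : Fin n) :
    (∫ t in (-1 : ℝ)..0,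
        fgen (((cycleGraph n)ᶜ).induce (((cycleGraph n)ᶜ).neighborSet v)) t) =
      (1 - 2 * Real.cos (Real.pi * n / 3)) / n ∧
    (∫ t in (-1 : ℝ)..0,
        fgen (((cycleGraph n)ᶜ).induce (((cycleGraph n)ᶜ).neighborSet v)) t) =
      (eulerChar ((cycleGraph n)ᶜ) : ℝ) / n := by
  have hint : (∫ t in (-1:ℝ)..0,
      fgen (((cycleGraph n)ᶜ).induce (((cycleGraph n)ᶜ).neighborSet v)) t)
      = (1 - 2 * Real.cos (Real.pi * n / 3)) / n := by
    rw [intervalIntegral.integral_congr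
      (g := fun t => (fibP (n-3)).eval t) (fun t _ => sphere_fgen n hn v t)]
    rw [integral_fib (n-3)]
    have hc : ((n-3:ℕ):ℝ) + 3 = (n:ℝ) := by
      rw [Nat.cast_sub (by omega : 3 ≤ n)]; ring
    rw [hc]
  refine ⟨hint, ?_⟩
  rw [hint, cycle_compl_eulerChar n hn]
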